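/- Let $a=x_1<x_2<\dots<x_N=b$ be equispaced nodes with spacing $h=(b-a)/(N-1)$, and let $S:[a,b]\to[-1,1]$ be the map sending $x_i$ to the Chebyshev–Lobatto node $\cos((N-i)\pi/(N-1))$, extended so that $S(x)=\cos\big(\pi\frac{b-x}{b-a}\big)$. Then the quadrature weights of the interpolatory rule obtained by integrating the mapped polynomial interpolant, $\int_a^b \ell_i(S(x))\,dx$ where $\ell_i$ are the Lagrange basis polynomials at the Chebyshev–Lobatto nodes, equal the composite trapezoidal weights: $w_1=w_N=h/2$ and $w_i=h$ for $1<i<N$. -/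

import Mathlib

/-!
The substitution `θ = π (b - t) / (b - a)` turns the weight into `(b - a) / π` times
`∫₀^π ℓᵢ(cos θ) dθ`. The composite trapezoidal rule on `[0, π]` with step `π / n` evaluates
`P (cos θ)` at `θ = jπ / n`, i.e. `P` at the Chebyshev–Lobatto points, and it integrates
`T_k (cos θ) = cos (kθ)` exactly whenever `2n ∤ k`: both sides vanish, the sum by telescoping
after multiplication by `sin (kπ / 2n)`. Hence the rule is exact for `P (cos θ)` with
`deg P < 2n`, in particular for `ℓᵢ`, which has degree `n`; and since `ℓᵢ` is `1` at one node
and `0` at the others, the rule returns a single trapezoidal weight.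
-/

open Real Finset Polynomial Polynomial.Chebyshev

theorem intervalIntegral.integral_comp_reflect_affine (f : ℝ → ℝ) {a b : ℝ} (hab : a ≠ b)
    {L : ℝ} (hL : L ≠ 0) :
    ∫ t in a..b, f (L * (b - t) / (b - a)) = (b - a) / L * ∫ θ in 0..L, f θ := by
  have hc : L / (b - a) ≠ 0 := div_ne_zero hL (sub_ne_zero.mpr hab.symm)
  have key : ∀ t, L * (b - t) / (b - a) = L / (b - a) * b - L / (b - a) * t := fun t => by ring
  simp_rw [key]
  rw [intervalIntegral.integral_comp_sub_mul f hc, sub_self, ← mul_sub,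
    div_mul_cancel₀ L (sub_ne_zero.mpr hab.symm), smul_eq_mul, inv_div]

theorem Real.sin_half_mul_sum_cos_add_cos (α : ℝ) (n : ℕ) :
    sin (α / 2) * ∑ j ∈ range n, (cos (j * α) + cos ((j + 1) * α)) = cos (α / 2) * sin (n * α) := by
  have term : ∀ j : ℕ, sin (α / 2) * (cos (j * α) + cos ((j + 1) * α)) =
      cos (α / 2) * (sin ((j + 1 : ℕ) * α) - sin (j * α)) := fun j => by
    have h1 : (j : ℝ) * α = (j + 1 / 2) * α - α / 2 := by ring
    have h2 : ((j : ℝ) + 1) * α = (j + 1 / 2) * α + α / 2 := by ring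
    rw [Nat.cast_succ, h1, h2, cos_add, cos_sub, sin_add, sin_sub]
    ring
  rw [mul_sum, sum_congr rfl fun j _ => term j, ← mul_sum, sum_range_sub (fun j => sin (j * α))]
  simp

namespace Polynomial.Chebyshev

/-- Weight of `node n i = cos (iπ / n)` in the composite trapezoidal rule on `[0, π]` with
step `π / n`. -/
noncomputable def trapezoidWeight (n i : ℕ) : ℝ := if i = 0 ∨ i = n then π / n / 2 else π / n

theorem sum_Iic_mul_trapezoidWeight {n : ℕ} (hn : n ≠ 0) (f : ℕ → ℝ) :
    ∑ i ∈ Iic n, f i * trapezoidWeight n i = π / n / 2 * ∑ j ∈ range n, (f j + f (j + 1)) := by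
  obtain ⟨m, rfl⟩ : ∃ m, n = m + 1 := ⟨n - 1, by omega⟩
  have hmid : ∀ j ∈ range m, f (j + 1) * trapezoidWeight (m + 1) (j + 1) =
      f (j + 1) * (π / (m + 1 : ℕ)) := fun j hj => by
    rw [trapezoidWeight, if_neg (by grind)]
  have hleft : ∑ j ∈ range (m + 1), f j = f 0 + ∑ j ∈ range m, f (j + 1) := by
    rw [sum_range_succ', add_comm]
  rw [← Nat.range_succ_eq_Iic, sum_range_succ, sum_range_succ', sum_congr rfl hmid,
    sum_add_distrib, hleft, sum_range_succ (fun j => f (j + 1)), ← sum_mul]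
  simp only [trapezoidWeight, true_or, or_true, if_true]
  ring

theorem sumNodes_sum (n : ℕ) (c : ℕ → ℝ) {ι : Type*} (s : Finset ι) (P : ι → ℝ[X]) :
    sumNodes n c (∑ i ∈ s, P i) = ∑ i ∈ s, sumNodes n c (P i) := by
  simp_rw [sumNodes, eval_finsetSum, sum_mul]
  exact sum_comm

theorem sumNodes_smul (n : ℕ) (c : ℕ → ℝ) (a : ℝ) (P : ℝ[X]) :
    sumNodes n c (a • P) = a * sumNodes n c P := by
  simp_rw [sumNodes, eval_smul, smul_eq_mul, mul_sum, mul_assoc]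

theorem sumNodes_trapezoidWeight_T_zero {n : ℕ} (hn : n ≠ 0) :
    sumNodes n (trapezoidWeight n) (T ℝ 0) = π := by
  rw [sumNodes, sum_Iic_mul_trapezoidWeight hn]
  simp only [T_zero, eval_one, sum_const, card_range, nsmul_eq_mul]
  field_simp
  ring

theorem sumNodes_trapezoidWeight_T_of_not_dvd {n : ℕ} (hn : n ≠ 0) {k : ℤ}
    (hk : ¬ (2 * n : ℤ) ∣ k) : sumNodes n (trapezoidWeight n) (T ℝ k) = 0 := by
  set α : ℝ := k * π / n
  have hsin : sin (α / 2) ≠ 0 := by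
    refine sin_ne_zero_iff.mpr fun m hm => hk ⟨m, ?_⟩
    have : (k : ℝ) = 2 * n * m := by
      simp only [α] at hm
      field_simp at hm
      linear_combination -hm
    exact_mod_cast this
  have hsin_n : sin (n * α) = 0 := by
    rw [show (n : ℝ) * α = k * π by simp only [α]; field_simp]
    exact sin_int_mul_pi k
  have hnode : ∀ i : ℕ, (T ℝ k).eval (node n i) = cos (i * α) := fun i => by
    rw [node, T_real_cos]
    congr 1
    simp only [α]
    ring
  rw [sumNodes, sum_Iic_mul_trapezoidWeight hn]
  simp_rw [hnode]
  push_cast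
  refine mul_eq_zero_of_right _ (mul_left_cancel₀ hsin ?_)
  rw [sin_half_mul_sum_cos_add_cos, hsin_n, mul_zero, mul_zero]

theorem integral_eval_cos_eq_sumNodes_trapezoidWeight {n : ℕ} (hn : n ≠ 0) {P : ℝ[X]}
    (hP : P.degree < 2 * n) :
    ∫ θ in 0..π, P.eval (cos θ) = sumNodes n (trapezoidWeight n) P := by
  rw [← integral_measureT_eq_integral_cos (f := (P.eval ·))]
  have hmem : P ∈ degreeLT ℝ (2 * n) := by rwa [mem_degreeLT]
  rw [← Sequence.span_degreeLT (chebyshevTsequence ℝ) (by simp),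
    show Set.Iio (2 * n) = Finset.range (2 * n) by simp,
    Submodule.mem_span_image_finset_iff_exists_fun'] at hmem
  obtain ⟨c, rfl⟩ := hmem
  simp_rw [eval_finsetSum, eval_smul, smul_eq_mul]
  rw [MeasureTheory.integral_finsetSum _ fun i _ => integrable_measureT (by fun_prop),
    sumNodes_sum]
  refine sum_congr rfl fun k hk => ?_
  rw [MeasureTheory.integral_const_mul, sumNodes_smul]
  congr 1
  simp only [chebyshevTsequence]
  obtain rfl | hk0 := eq_or_ne k 0
  · rw [Nat.cast_zero, integral_eval_T_real_measureT_zero, sumNodes_trapezoidWeight_T_zero hn]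
  · have hdvd : ¬ (2 * n : ℤ) ∣ k := fun h =>
      hk0 (by exact_mod_cast Int.eq_zero_of_dvd_of_natAbs_lt_natAbs h (by grind))
    rw [integral_eval_T_real_measureT_of_ne_zero (by exact_mod_cast hk0),
      sumNodes_trapezoidWeight_T_of_not_dvd hn hdvd]

theorem sumNodes_eq_of_eval_node_eq_ite {n m : ℕ} (hm : m ≤ n) (c : ℕ → ℝ) {P : ℝ[X]}
    (hP : ∀ j ≤ n, P.eval (node n j) = if j = m then 1 else 0) : sumNodes n c P = c m := by
  rw [sumNodes, sum_congr rfl fun j hj => by rw [hP j (mem_Iic.mp hj)]]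
  simp [hm]

theorem integral_eval_cos_lagrangeBasis_node_rev {n : ℕ} (hn : n ≠ 0) (i : Fin (n + 1)) :
    ∫ θ in 0..π, (Lagrange.basis univ (fun j : Fin (n + 1) => node n (n - j)) i).eval (cos θ) =
      trapezoidWeight n (n - i) := by
  set v : Fin (n + 1) → ℝ := fun j => node n (n - j)
  have hv : Set.InjOn v (univ : Finset (Fin (n + 1))) := by
    intro j _ k _ h
    have := (strictAntiOn_node n).injOn (by simp) (by simp) h
    omega
  have hdeg : (Lagrange.basis univ v i).degree < 2 * n := by
    refine degree_le_natDegree.trans_lt ?_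
    rw [Lagrange.natDegree_basis hv (mem_univ i), card_univ, Fintype.card_fin]
    exact_mod_cast (by omega : n + 1 - 1 < 2 * n)
  rw [integral_eval_cos_eq_sumNodes_trapezoidWeight hn hdeg]
  refine sumNodes_eq_of_eval_node_eq_ite (by omega) _ fun j hj => ?_
  have hj' : node n j = v ⟨n - j, by omega⟩ := by simp [v, Nat.sub_sub_self hj]
  rw [hj']
  split_ifs with hji
  · rw [show (⟨n - j, _⟩ : Fin (n + 1)) = i from Fin.ext (by simp only; omega)]
    exact Lagrange.eval_basis_self hv (mem_univ i)
  · exact Lagrange.eval_basis_of_ne (fun h => hji (by simp [h]; omega)) (mem_univ _)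

end Polynomial.Chebyshev

open Real in
theorem stmt_16_general (N : ℕ) (hN : 2 ≤ N) (a b : ℝ) (hab : a < b)
    (y : Fin N → ℝ) (hy : ∀ i : Fin N, y i = Real.cos ((N - 1 - (i : ℕ)) * π / (N - 1)))
    (S : ℝ → ℝ) (hS : ∀ t, S t = Real.cos (π * (b - t) / (b - a)))
    (w : Fin N → ℝ)
    (hw : ∀ i, w i = ∫ t in a..b, (Lagrange.basis Finset.univ y i).eval (S t)) :
    ∀ i : Fin N,
      w i = if (i : ℕ) = 0 ∨ (i : ℕ) = N - 1 then (b - a) / (N - 1) / 2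
        else (b - a) / (N - 1) := by
  intro i
  obtain ⟨n, rfl⟩ : ∃ n, N = n + 1 := ⟨N - 1, by omega⟩
  have hn : n ≠ 0 := by omega
  obtain rfl : y = fun j : Fin (n + 1) => node n (n - j) := funext fun j => by
    rw [hy, node, Nat.cast_sub (Fin.is_le j)]
    push_cast
    ring_nf
  simp_rw [hw, hS]
  rw [intervalIntegral.integral_comp_reflect_affine
    (fun θ => eval (cos θ) (Lagrange.basis univ _ i)) hab.ne pi_ne_zero,
    integral_eval_cos_lagrangeBasis_node_rev hn i, trapezoidWeight]
  have hcast : ((n + 1 : ℕ) : ℝ) - 1 = n := by push_cast; ring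
  rw [hcast]
  split_ifs <;> first | omega | field_simp

open Real in
/-- Integrating the mapped Lagrange basis (equispaced nodes mapped to
Chebyshev–Lobatto nodes) yields exactly the composite trapezoidal weights. -/
theorem stmt_16 (N : ℕ) (hN : 2 ≤ N) (a b : ℝ) (hab : a < b)
    (x : Fin N → ℝ) (hx : ∀ i : Fin N, x i = a + i * ((b - a) / (N - 1)))
    (y : Fin N → ℝ) (hy : ∀ i : Fin N, y i = Real.cos ((N - 1 - (i : ℕ)) * π / (N - 1)))
    (S : ℝ → ℝ) (hS : ∀ t, S t = Real.cos (π * (b - t) / (b - a)))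
    (w : Fin N → ℝ)
    (hw : ∀ i, w i = ∫ t in a..b, (Lagrange.basis Finset.univ y i).eval (S t)) :
    ∀ i : Fin N,
      w i = if (i : ℕ) = 0 ∨ (i : ℕ) = N - 1 then (b - a) / (N - 1) / 2
        else (b - a) / (N - 1) :=
  stmt_16_general N hN a b hab y hy S hS w hw
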